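/- Let α be a multiplier on the finite group G and (π,V,α) a projective representation with V ≠ 0. Then π is irreducible if and only if for every linear map f : V → V there is a scalar c ∈ ℂ with ⟨f⟩_π = c • 1_V. -/

import Mathlib

/-!
Averaging `T` over the group gives an operator commuting with every `π g`: the multiplier
factors picked up by `π g⁻¹` and by `π g` cancel. If `π` is irreducible, Schur's lemma (an
eigenspace of the average is invariant) makes it scalar. Conversely, if `W ≠ 0` is invariant
and `P` is a projection onto `W`, the average of `P` fixes `W` pointwise and maps `V` into `W`;
being scalar, it is the identity, so `W = V`.
-/

open Finset Module

theorem mul_conj_eq_conj_mul_of_mul_eq_smul {K A : Type*} [CommSemiring K] [Ring A]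
    [Algebra K A] {a b c : Aˣ} {t : K} (h : (a : A) * b = t • (c : A)) (T : A) :
    (b : A) * (↑c⁻¹ * T * c) = ↑a⁻¹ * T * a * b := by
  have hb : (b : A) * ↑c⁻¹ = t • (↑a⁻¹ : A) := by
    calc (b : A) * ↑c⁻¹ = ↑a⁻¹ * (a * b) * ↑c⁻¹ := by simp [← mul_assoc]
      _ = t • (↑a⁻¹ : A) := by
        rw [h, mul_smul_comm, smul_mul_assoc, mul_assoc, Units.mul_inv, mul_one]
  calc (b : A) * (↑c⁻¹ * T * c) = (b * ↑c⁻¹) * T * c := by simp only [mul_assoc]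
    _ = ↑a⁻¹ * T * (t • (c : A)) := by rw [hb, smul_mul_assoc, smul_mul_assoc, mul_smul_comm]
    _ = ↑a⁻¹ * T * a * b := by rw [← h]; simp only [mul_assoc]

theorem exists_eq_smul_one_of_forall_commute {K V ι : Type*} [Field K] [IsAlgClosed K]
    [AddCommGroup V] [Module K V] [FiniteDimensional K V] [Nontrivial V] (ρ : ι → End K V)
    (hρ : ∀ W : Submodule K V, (∀ i, ∀ v ∈ W, ρ i v ∈ W) → W = ⊥ ∨ W = ⊤)
    {S : End K V} (hS : ∀ i, Commute S (ρ i)) : ∃ c : K, S = c • 1 := by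
  obtain ⟨c, hc⟩ := S.exists_eigenvalue
  refine ⟨c, ?_⟩
  rcases hρ _ fun i v hv => End.mapsTo_genEigenspace_of_comm (hS i) c 1 hv with hbot | htop
  · exact absurd hbot (End.hasEigenvalue_iff.mp hc)
  · ext v
    simpa using End.mem_eigenspace_iff.mp (Submodule.eq_top_iff'.mp htop v)

theorem Submodule.units_inv_mem_of_forall_mem {K V : Type*} [DivisionRing K]
    [AddCommGroup V] [Module K V] [FiniteDimensional K V] (u : (End K V)ˣ) {W : Submodule K V}
    (hW : ∀ v ∈ W, (u : End K V) v ∈ W) : ∀ v ∈ W, (↑u⁻¹ : End K V) v ∈ W := by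
  intro v hv
  have hinj : Function.Injective ((u : End K V).restrict hW) := fun x y hxy =>
    Subtype.ext (((End.isUnit_iff _).mp u.isUnit).injective (congrArg Subtype.val hxy))
  obtain ⟨w, hw⟩ := LinearMap.injective_iff_surjective.mp hinj ⟨v, hv⟩
  have hw' : (u : End K V) w = v := congrArg Subtype.val hw
  rw [← hw', ← End.mul_apply, Units.inv_mul, End.one_apply]
  exact w.2

section conjAvg

variable {G K V : Type*} [Fintype G] [Field K] [AddCommGroup V] [Module K V]

noncomputable def conjAvg (π : G → (End K V)ˣ) (T : End K V) : End K V :=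
  (Fintype.card G : K)⁻¹ • ∑ g, (↑(π g)⁻¹ : End K V) * T * π g

theorem commute_conjAvg [Group G] {α : G → G → Kˣ} {π : G → (End K V)ˣ}
    (hπ : ∀ x y, (π x : End K V) * π y = (α x y : K) • (π (x * y) : End K V))
    (h : G) (T : End K V) : Commute (π h : End K V) (conjAvg π T) := by
  rw [Commute, SemiconjBy, conjAvg, mul_smul_comm, smul_mul_assoc, mul_sum, sum_mul]
  congr 1
  exact (Fintype.sum_equiv (Equiv.mulRight h) _ _
    fun g => (mul_conj_eq_conj_mul_of_mul_eq_smul (hπ g h) T).symm).symm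

theorem conjAvg_apply_of_mem {π : G → (End K V)ˣ} (hG : (Fintype.card G : K) ≠ 0)
    {W : Submodule K V} (hW : ∀ g, ∀ v ∈ W, (π g : End K V) v ∈ W) {P : End K V}
    (hP : ∀ v ∈ W, P v = v) : ∀ v ∈ W, conjAvg π P v = v := by
  intro v hv
  have hterm : ∀ g, ((↑(π g)⁻¹ : End K V) * P * π g) v = v := fun g => by
    rw [End.mul_apply, End.mul_apply, hP _ (hW g v hv), ← End.mul_apply, Units.inv_mul,
      End.one_apply]
  rw [conjAvg, LinearMap.smul_apply, LinearMap.sum_apply]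
  simp only [hterm, sum_const, card_univ, ← Nat.cast_smul_eq_nsmul K, smul_smul,
    inv_mul_cancel₀ hG, one_smul]

theorem conjAvg_apply_mem {π : G → (End K V)ˣ} {W : Submodule K V}
    (hW : ∀ g, ∀ v ∈ W, (↑(π g)⁻¹ : End K V) v ∈ W) {P : End K V} (hP : ∀ v, P v ∈ W)
    (v : V) : conjAvg π P v ∈ W := by
  rw [conjAvg, LinearMap.smul_apply, LinearMap.sum_apply]
  exact W.smul_mem _ (W.sum_mem fun g _ => hW g _ (hP _))

theorem conjAvg_eq_smul_one_of_irreducible [Group G] [IsAlgClosed K] [FiniteDimensional K V]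
    [Nontrivial V] {α : G → G → Kˣ} {π : G → (End K V)ˣ}
    (hπ : ∀ x y, (π x : End K V) * π y = (α x y : K) • (π (x * y) : End K V))
    (hirr : ∀ W : Submodule K V, (∀ g, ∀ v ∈ W, (π g : End K V) v ∈ W) → W = ⊥ ∨ W = ⊤)
    (T : End K V) : ∃ c : K, conjAvg π T = c • 1 :=
  exists_eq_smul_one_of_forall_commute _ hirr fun g => (commute_conjAvg hπ g T).symm

theorem irreducible_of_conjAvg_eq_smul_one [FiniteDimensional K V] {π : G → (End K V)ˣ}
    (hG : (Fintype.card G : K) ≠ 0) (hscalar : ∀ T : End K V, ∃ c : K, conjAvg π T = c • 1) :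
    ∀ W : Submodule K V, (∀ g, ∀ v ∈ W, (π g : End K V) v ∈ W) → W = ⊥ ∨ W = ⊤ := by
  intro W hW
  refine or_iff_not_imp_left.mpr fun hbot => ?_
  obtain ⟨w, hw, hw0⟩ := (Submodule.ne_bot_iff W).mp hbot
  obtain ⟨W', hWW'⟩ := W.exists_isCompl
  obtain ⟨c, hc⟩ := hscalar (W.projection W' hWW')
  have hfix := conjAvg_apply_of_mem hG hW fun v hv => Submodule.projection_apply_of_mem_left hWW' hv
  have hc1 : c = 1 := smul_left_injective K hw0 (by simpa [hc] using hfix w hw)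
  rw [Submodule.eq_top_iff']
  intro v
  have hv := conjAvg_apply_mem (fun g => W.units_inv_mem_of_forall_mem (π g) (hW g))
    (Submodule.projection_apply_mem hWW') v
  rwa [hc, hc1, one_smul, End.one_apply] at hv

end conjAvg

theorem stmt_17_general {G : Type*} [Group G] [Fintype G]
    {V : Type*} [AddCommGroup V] [Module ℂ V] [FiniteDimensional ℂ V]
    [Nontrivial V]
    (α : G → G → ℂˣ)
    (π : G → (Module.End ℂ V)ˣ)
    (hπ : ∀ x y : G, (π x : Module.End ℂ V) * (π y : Module.End ℂ V)
        = (α x y : ℂ) • (π (x * y) : Module.End ℂ V))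
    (avg : Module.End ℂ V → Module.End ℂ V)
    (havg : ∀ T : Module.End ℂ V, avg T = (Fintype.card G : ℂ)⁻¹ •
        ∑ g : G, (((π g)⁻¹ : (Module.End ℂ V)ˣ) : Module.End ℂ V) * T *
          (π g : Module.End ℂ V)) :
    (∀ W : Submodule ℂ V,
        (∀ g : G, ∀ v ∈ W, (π g : Module.End ℂ V) v ∈ W) → W = ⊥ ∨ W = ⊤)
      ↔ (∀ T : Module.End ℂ V, ∃ c : ℂ, avg T = c • (1 : Module.End ℂ V)) := by
  obtain rfl : avg = conjAvg π := funext havg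
  exact ⟨conjAvg_eq_smul_one_of_irreducible hπ,
    irreducible_of_conjAvg_eq_smul_one (Nat.cast_ne_zero.mpr Fintype.card_ne_zero)⟩

/-- For `V ≠ 0`, `π` is irreducible iff `⟨f⟩_π` is a scalar
multiple of the identity for every linear map `f : V → V`. -/
theorem stmt_17 {G : Type*} [Group G] [Fintype G]
    {V : Type*} [AddCommGroup V] [Module ℂ V] [FiniteDimensional ℂ V]
    [Nontrivial V]
    (α : G → G → ℂˣ)
    (hα : ∀ x y z : G, α x y * α (x * y) z = α x (y * z) * α y z)
    (hα1 : ∀ x : G, α x 1 = 1 ∧ α 1 x = 1)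
    (π : G → (Module.End ℂ V)ˣ)
    (hπ1 : π 1 = 1)
    (hπ : ∀ x y : G, (π x : Module.End ℂ V) * (π y : Module.End ℂ V)
        = (α x y : ℂ) • (π (x * y) : Module.End ℂ V))
    (avg : Module.End ℂ V → Module.End ℂ V)
    (havg : ∀ T : Module.End ℂ V, avg T = (Fintype.card G : ℂ)⁻¹ •
        ∑ g : G, (((π g)⁻¹ : (Module.End ℂ V)ˣ) : Module.End ℂ V) * T *
          (π g : Module.End ℂ V)) :
    (∀ W : Submodule ℂ V,
        (∀ g : G, ∀ v ∈ W, (π g : Module.End ℂ V) v ∈ W) → W = ⊥ ∨ W = ⊤)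
      ↔ (∀ T : Module.End ℂ V, ∃ c : ℂ, avg T = c • (1 : Module.End ℂ V)) :=
  stmt_17_general α π hπ avg havg
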